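/- Let s ≥ 1 be an integer, q = 2^s, m ≥ 3 an odd integer, and n = q^m − 1. Then for each i ∈ {0,1}, the code C_{(q,m;i)} has dimension (n+1)/2 as an F-vector space. -/

import Mathlib

open Finset

/-- The `q`-weight of a nonnegative integer: the sum of its base-`q` digits. -/
def qWeight (q i : ℕ) : ℕ := (Nat.digits q i).sum

/-- The set `T_{(q,m;j)} = {i : 1 ≤ i ≤ q^m − 2, wt_q(i) ≡ j (mod 2)}`. -/
def Tset (q m j : ℕ) : Set ℕ :=
  {i | 1 ≤ i ∧ i ≤ q ^ m - 2 ∧ qWeight q i % 2 = j}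

/-- The cyclic code of length `n` over `F` with defining set `T` with respect to `β ∈ E`:
all words `(c_0, …, c_{n-1})` with `∑_j c_j β^{k j} = 0` for every `k ∈ T`. -/
def cyclicCode (F E : Type*) [Field F] [Field E] [Algebra F E]
    (n : ℕ) (β : E) (T : Set ℕ) : Submodule F (Fin n → F) where
  carrier := {c | ∀ k ∈ T, ∑ j : Fin n, algebraMap F E (c j) * β ^ (k * (j : ℕ)) = 0}
  add_mem' := by
    intro a b ha hb k hk
    simp only [Set.mem_setOf_eq, Pi.add_apply, map_add, add_mul] at *
    rw [Finset.sum_add_distrib, ha k hk, hb k hk, add_zero]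
  zero_mem' := by
    intro k hk
    simp
  smul_mem' := by
    intro r c hc k hk
    simp only [Set.mem_setOf_eq, Pi.smul_apply, smul_eq_mul, map_mul, mul_assoc] at *
    rw [← Finset.mul_sum, hc k hk, mul_zero]

/-- The minimum distance of a code: the least Hamming weight of a nonzero codeword. -/
noncomputable def minDist {F : Type*} [Field F] [DecidableEq F] {n : ℕ}
    (C : Submodule F (Fin n → F)) : ℕ :=
  sInf {w | ∃ c ∈ C, c ≠ 0 ∧ hammingNorm c = w}

/-! The code consists of the words whose polynomial is divisible by `g = ∏_{k ∈ T} (X - β^k)`,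
so it has dimension `n - |T|` as soon as `g` has coefficients in `F`. Multiplication by `q`
modulo `q^m - 1` rotates base-`q` digits, so `T` is stable under it; hence `g` is fixed by the
Frobenius `x ↦ x^q` and is defined over `F`. Since `q` is even, `2i` and `2i + 1` have
`q`-weights of opposite parity, so each parity class fills half of `[0, q^m)`; removing `0`
(weight `0`) and `q^m - 1` (weight `m(q - 1)`, odd) leaves `|T| = q^m/2 - 1`. -/

lemma qWeight_add_mul {q : ℕ} (hq : 1 < q) {b : ℕ} (hb : b < q) (a : ℕ) :
    qWeight q (b + q * a) = b + qWeight q a := by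
  by_cases h : b = 0 ∧ a = 0
  · obtain ⟨rfl, rfl⟩ := h
    simp [qWeight]
  · rw [qWeight, Nat.digits_add q hq b a hb (by tauto), List.sum_cons]
    rfl

lemma qWeight_of_lt {q b : ℕ} (hq : 1 < q) (hb : b < q) : qWeight q b = b := by
  simpa [qWeight] using qWeight_add_mul hq hb 0

lemma qWeight_eq_mod_add_div {q : ℕ} (hq : 1 < q) (k : ℕ) :
    qWeight q k = k % q + qWeight q (k / q) := by
  conv_lhs => rw [← Nat.mod_add_div k q]
  exact qWeight_add_mul hq (Nat.mod_lt k (by omega)) _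

lemma qWeight_add_pow_mul {q : ℕ} (hq : 1 < q) (a : ℕ) :
    ∀ {e r : ℕ}, r < q ^ e → qWeight q (r + q ^ e * a) = qWeight q r + qWeight q a
  | 0, r, hr => by simp_all [qWeight]
  | e + 1, r, hr => by
    have hrq : r / q < q ^ e := Nat.div_lt_of_lt_mul (by rwa [mul_comm, ← pow_succ])
    have hsplit : r + q ^ (e + 1) * a = r % q + q * (r / q + q ^ e * a) := by
      rw [pow_succ', mul_assoc, mul_add, ← add_assoc, Nat.mod_add_div]
    rw [hsplit, qWeight_add_mul hq (Nat.mod_lt r (by omega)), qWeight_add_pow_mul hq a hrq,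
      qWeight_eq_mod_add_div hq r, add_assoc]

lemma qWeight_succ_of_even {q k : ℕ} (hq : 1 < q) (hqe : Even q) (hk : Even k) :
    qWeight q (k + 1) = qWeight q k + 1 := by
  have hmod : k % q % 2 = 0 := by
    rw [Nat.mod_mod_of_dvd k hqe.two_dvd]
    exact Nat.even_iff.mp hk
  have hlt : k % q + 1 < q := by
    have := Nat.mod_lt k (by omega : 0 < q)
    have := Nat.even_iff.mp hqe
    omega
  rw [qWeight_eq_mod_add_div hq k, add_right_comm, ← qWeight_add_mul hq hlt, add_right_comm,
    Nat.mod_add_div]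

lemma qWeight_pow_sub_one {q : ℕ} (hq : 1 < q) (m : ℕ) :
    qWeight q (q ^ m - 1) = m * (q - 1) := by
  induction m with
  | zero => simp [qWeight]
  | succ m ih =>
    have hpos : 0 < q ^ m := by positivity
    have hsplit : q ^ (m + 1) - 1 = (q - 1) + q * (q ^ m - 1) := by
      rw [pow_succ', Nat.mul_sub, mul_one]
      have := Nat.le_mul_of_pos_right q hpos
      omega
    rw [hsplit, qWeight_add_mul hq (by omega), ih]
    ring

lemma card_filter_range_qWeight_mod_two {q p : ℕ} (hq : 1 < q) (hqe : Even q) (hp : p < 2)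
    (N : ℕ) : #{k ∈ range (2 * N) | qWeight q k % 2 = p} = N := by
  induction N with
  | zero => simp
  | succ N ih =>
    have hsucc := qWeight_succ_of_even hq hqe (even_two_mul N)
    rw [card_filter] at ih ⊢
    rw [mul_add_one, sum_range_succ, sum_range_succ, ih]
    split_ifs <;> omega

def Tfinset (q m j : ℕ) : Finset ℕ := {k ∈ Icc 1 (q ^ m - 2) | qWeight q k % 2 = j}

lemma coe_Tfinset (q m j : ℕ) : (Tfinset q m j : Set ℕ) = Tset q m j := by
  ext k
  simp [Tfinset, Tset, and_assoc]

lemma card_Tfinset {q m j : ℕ} (hq : 1 < q) (hqe : Even q) (hm : Odd m) (hj : j < 2) :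
    #(Tfinset q m j) = q ^ m / 2 - 1 := by
  have hQe : Even (q ^ m) := hqe.pow_of_ne_zero hm.pos.ne'
  have hQ : 2 ≤ q ^ m := (Nat.le_self_pow hm.pos.ne' q).trans' hq
  have hcount := card_filter_range_qWeight_mod_two hq hqe hj (q ^ m / 2)
  rw [Nat.two_mul_div_two_of_even hQe] at hcount
  have hsplit : range (q ^ m) = insert 0 (insert (q ^ m - 1) (Icc 1 (q ^ m - 2))) := by
    ext k
    simp only [mem_range, mem_insert, mem_Icc]
    omega
  have hzero : qWeight q 0 % 2 = 0 := by simp [qWeight]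
  have hlast : qWeight q (q ^ m - 1) % 2 = 1 := by
    rw [qWeight_pow_sub_one hq, ← Nat.odd_iff]
    exact hm.mul (Nat.Even.sub_odd hq.le hqe odd_one)
  have hzero_notMem : 0 ∉ Tfinset q m j := by simp [Tfinset]
  have hlast_notMem : q ^ m - 1 ∉ Tfinset q m j := by simp [Tfinset]; omega
  rw [hsplit, filter_insert, filter_insert, ← Tfinset] at hcount
  interval_cases j
  · rw [if_pos hzero, if_neg (by omega), card_insert_of_notMem hzero_notMem] at hcount
    omega
  · rw [if_neg (by omega), if_pos hlast, card_insert_of_notMem hlast_notMem] at hcount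
    omega

lemma mul_mod_pow_sub_one {q m k : ℕ} (hq : 1 < q) (hk : k < q ^ m - 1) :
    q * k % (q ^ m - 1) = k / q ^ (m - 1) + q * (k % q ^ (m - 1)) := by
  have hm : m ≠ 0 := by rintro rfl; simp at hk
  set Q := q ^ (m - 1)
  have hQ : q ^ m = q * Q := by rw [← pow_succ', Nat.sub_add_cancel (by omega)]
  have ha : k / Q < q := Nat.div_lt_of_lt_mul (by rw [mul_comm, ← hQ]; omega)
  have hr : k % Q < Q := Nat.mod_lt k (by positivity)
  have hk' := Nat.mod_add_div k Q
  have hlt : k / Q + q * (k % Q) < q ^ m - 1 := by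
    rw [hQ] at hk ⊢
    suffices k / Q + q * (k % Q) + 1 < q * Q by omega
    replace hk : k + 1 < q * Q := by omega
    clear_value Q
    generalize k / Q = a at *
    generalize k % Q = r at *
    rcases Nat.lt_or_ge (r + 1) Q with hr1 | hr1
    · nlinarith [Nat.mul_le_mul_left q hr1]
    · obtain rfl : Q = r + 1 := by omega
      have : a + 1 < q := by
        by_contra! h
        nlinarith [Nat.mul_le_mul_left (r + 1) h]
      nlinarith
  have hdecomp : q * k = (k / Q + q * (k % Q)) + (q ^ m - 1) * (k / Q) := by
    have hQpos : 1 ≤ q * Q := Nat.one_le_iff_ne_zero.mpr (hQ ▸ by positivity)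
    conv_lhs => rw [← hk']
    rw [hQ]
    zify [hQpos]
    ring
  rw [hdecomp, Nat.add_mul_mod_self_left, Nat.mod_eq_of_lt hlt]

lemma qWeight_mul_mod_pow_sub_one {q m k : ℕ} (hq : 1 < q) (hk : k < q ^ m - 1) :
    qWeight q (q * k % (q ^ m - 1)) = qWeight q k := by
  have hm : m ≠ 0 := by rintro rfl; simp at hk
  set Q := q ^ (m - 1)
  have ha : k / Q < q :=
    Nat.div_lt_of_lt_mul (by rw [← pow_succ, Nat.sub_add_cancel (by omega)]; omega)
  calc qWeight q (q * k % (q ^ m - 1)) = k / Q + qWeight q (k % Q) := by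
        rw [mul_mod_pow_sub_one hq hk, qWeight_add_mul hq ha]
    _ = qWeight q (k % Q + Q * (k / Q)) := by
        rw [qWeight_add_pow_mul hq _ (Nat.mod_lt k (by positivity)), qWeight_of_lt hq ha, add_comm]
    _ = qWeight q k := by rw [Nat.mod_add_div]

lemma mul_mod_mem_Tfinset {q m j k : ℕ} (hq : 1 < q) (hk : k ∈ Tfinset q m j) :
    q * k % (q ^ m - 1) ∈ Tfinset q m j := by
  simp only [Tfinset, mem_filter, mem_Icc] at hk ⊢
  obtain ⟨⟨hk1, hk2⟩, hkj⟩ := hk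
  have hkn : k < q ^ m - 1 := by omega
  refine ⟨⟨?_, ?_⟩, by rw [qWeight_mul_mod_pow_sub_one hq hkn, hkj]⟩
  · rw [Nat.one_le_iff_ne_zero, mul_mod_pow_sub_one hq hkn]
    intro h
    obtain ⟨hdiv, hmod⟩ := Nat.add_eq_zero_iff.mp h
    have hmod : k % q ^ (m - 1) = 0 := (mul_eq_zero.mp hmod).resolve_left (by omega)
    have := Nat.mod_add_div k (q ^ (m - 1))
    rw [hdiv, hmod] at this
    omega
  · have := Nat.mod_lt (q * k) (show 0 < q ^ m - 1 by omega)
    omega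

section CyclicCode

open Polynomial

variable {F E : Type*} [Field F] [Field E] [Algebra F E]

lemma mem_range_algebraMap_of_pow_card_eq_self [Fintype F] {x : E} (hx : x ^ Fintype.card F = x) :
    x ∈ Set.range (algebraMap F E) := by
  classical
  have hq := Fintype.one_lt_card (α := F)
  have hroots : ((X ^ Fintype.card F - X : F[X]).map (algebraMap F E)).roots =
      univ.val.map (algebraMap F E) := by
    rw [← FiniteField.roots_X_pow_card_sub_X F]
    refine (roots_map_of_injective_of_card_eq_natDegree (algebraMap F E).injective ?_).symm
    rw [FiniteField.roots_X_pow_card_sub_X, FiniteField.X_pow_card_sub_X_natDegree_eq F hq]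
    rfl
  have hxroot : x ∈ ((X ^ Fintype.card F - X : F[X]).map (algebraMap F E)).roots := by
    rw [mem_roots (Polynomial.map_ne_zero (FiniteField.X_pow_card_sub_X_ne_zero F hq))]
    simp [hx]
  rw [hroots] at hxroot
  simpa using hxroot

lemma prod_X_sub_C_mem_lifts [Fintype F] {S : Finset E}
    (hS : ∀ x ∈ S, x ^ Fintype.card F ∈ S) :
    ∏ x ∈ S, (X - C x) ∈ lifts (algebraMap F E) := by
  classical
  let φ : E →+* E := FiniteField.frobeniusAlgHom F E
  have hφS : S.image φ = S :=
    eq_of_subset_of_card_le (image_subset_iff.2 hS) (card_image_of_injective _ φ.injective).ge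
  have hfix : (∏ x ∈ S, (X - C x)).map φ = ∏ x ∈ S, (X - C x) := by
    simp only [Polynomial.map_prod, Polynomial.map_sub, map_X, map_C]
    rw [← prod_image (f := fun x => X - C x) φ.injective.injOn, hφS]
  rw [lifts_iff_coeff_lifts]
  intro i
  apply mem_range_algebraMap_of_pow_card_eq_self
  simpa [φ] using congrArg (coeff · i) hfix

lemma aeval_eq_sum_degreeLTEquiv {n : ℕ} {p : F[X]} (hp : p ∈ degreeLT F n) (x : E) :
    aeval x p = ∑ i, algebraMap F E (degreeLTEquiv F n ⟨p, hp⟩ i) * x ^ (i : ℕ) := by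
  have hmap : p.map (algebraMap F E) ∈ degreeLT E n :=
    mem_degreeLT.2 (degree_map_le.trans_lt (mem_degreeLT.1 hp))
  rw [← eval_map_algebraMap, eval_eq_sum_degreeLTEquiv hmap]
  refine sum_congr rfl fun i _ => ?_
  change (p.map _).coeff i * _ = algebraMap F E (p.coeff i) * _
  rw [coeff_map]

lemma mem_cyclicCode_iff_aeval {n : ℕ} {β : E} {T : Set ℕ} {c : Fin n → F} :
    c ∈ cyclicCode F E n β T ↔
      ∀ k ∈ T, aeval (β ^ k) ((degreeLTEquiv F n).symm c : F[X]) = 0 := by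
  refine forall₂_congr fun k _ => ?_
  rw [aeval_eq_sum_degreeLTEquiv ((degreeLTEquiv F n).symm c).2, Subtype.coe_eta,
    LinearEquiv.apply_symm_apply]
  simp only [← pow_mul]

lemma mem_cyclicCode_iff_dvd {n : ℕ} {β : E} {T : Finset ℕ} (hinj : Set.InjOn (β ^ ·) T)
    {g : F[X]} (hg : g.map (algebraMap F E) = ∏ k ∈ T, (X - C (β ^ k))) {c : Fin n → F} :
    c ∈ cyclicCode F E n β T ↔ g ∣ ((degreeLTEquiv F n).symm c : F[X]) := by
  rw [mem_cyclicCode_iff_aeval, ← map_dvd_map' (algebraMap F E), hg]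
  constructor
  · intro h
    refine prod_dvd_of_coprime (fun k hk k' hk' hne => ?_) fun k hk => ?_
    · exact isCoprime_X_sub_C_of_isUnit_sub (sub_ne_zero.2 fun h => hne (hinj hk hk' h)).isUnit
    · rw [dvd_iff_isRoot, IsRoot.def, eval_map_algebraMap]
      exact h k hk
  · intro h k hk
    rw [← eval_map_algebraMap, ← IsRoot.def, ← dvd_iff_isRoot]
    exact (dvd_prod_of_mem (fun k => X - C (β ^ k)) (mem_coe.1 hk)).trans h

lemma Polynomial.mul_mem_degreeLT {R : Type*} [Semiring R] {g p : R[X]} {m n : ℕ}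
    (hn : g.natDegree + m ≤ n) (hp : p ∈ degreeLT R m) : g * p ∈ degreeLT R n := by
  rcases eq_or_ne p 0 with rfl | hp0
  · simp
  rw [mem_degreeLT] at hp ⊢
  have hpm := (natDegree_lt_iff_degree_lt hp0).2 hp
  calc (g * p).degree ≤ ((g * p).natDegree : WithBot ℕ) := degree_le_natDegree
    _ < n := by exact_mod_cast natDegree_mul_le.trans_lt (by omega)

lemma Polynomial.Monic.mem_degreeLT_of_mul_mem {R : Type*} [Semiring R] {g p : R[X]} {n : ℕ}
    (hg : g.Monic) (hgp : g * p ∈ degreeLT R n) : p ∈ degreeLT R (n - g.natDegree) := by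
  rcases eq_or_ne p 0 with rfl | hp0
  · simp
  nontriviality R
  rw [mem_degreeLT] at hgp ⊢
  rw [← natDegree_lt_iff_degree_lt hp0]
  have := (natDegree_lt_iff_degree_lt (hg.mul_right_ne_zero hp0)).2 hgp
  rw [hg.natDegree_mul' hp0] at this
  omega

theorem finrank_cyclicCode {n : ℕ} {β : E} {T : Finset ℕ} (hinj : Set.InjOn (β ^ ·) T)
    {g : F[X]} (hg : g.map (algebraMap F E) = ∏ k ∈ T, (X - C (β ^ k))) (hT : #T ≤ n) :
    Module.finrank F (cyclicCode F E n β T) = n - #T := by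
  have hgmonic : g.Monic :=
    monic_map_iff.1 (hg ▸ monic_prod_of_monic _ _ fun _ _ => monic_X_sub_C _)
  have hdeg : g.natDegree = #T := by
    rw [← hgmonic.natDegree_map (algebraMap F E), hg,
      natDegree_prod_of_monic _ _ fun _ _ => monic_X_sub_C _]
    simp only [natDegree_X_sub_C, sum_const, smul_eq_mul, mul_one]
  let μ : degreeLT F (n - #T) →ₗ[F] degreeLT F n :=
    (LinearMap.mulLeft F g).restrict fun _ hp => mul_mem_degreeLT (by omega) hp
  have hμ : Function.Injective μ := fun p p' h =>
    Subtype.ext (mul_left_cancel₀ hgmonic.ne_zero (congrArg Subtype.val h))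
  have hcode : cyclicCode F E n β T = (LinearMap.range μ).map
      (degreeLTEquiv F n : degreeLT F n →ₗ[F] Fin n → F) := by
    ext c
    rw [Submodule.mem_map_equiv, LinearMap.mem_range, mem_cyclicCode_iff_dvd hinj hg]
    constructor
    · rintro ⟨p, hp⟩
      have hgp : g * p ∈ degreeLT F n := hp ▸ ((degreeLTEquiv F n).symm c).2
      exact ⟨⟨p, hdeg ▸ hgmonic.mem_degreeLT_of_mul_mem hgp⟩, Subtype.ext hp.symm⟩
    · rintro ⟨p, hp⟩
      exact ⟨p, by rw [← hp]; rfl⟩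
  rw [hcode, LinearEquiv.finrank_map_eq, LinearMap.finrank_range_of_inj hμ,
    (degreeLTEquiv F _).finrank_eq, Module.finrank_fin_fun]

end CyclicCode

open Polynomial in
theorem stmt14_general (s q m n : ℕ) (hs : 1 ≤ s) (hq : q = 2 ^ s)
    (hmodd : Odd m) (hn : n = q ^ m - 1)
    (F E : Type*) [Field F] [Fintype F] [Field E] [Algebra F E]
    (hF : Fintype.card F = q)
    (β : E) (hβ : orderOf β = n) :
    ∀ j : ℕ, j = 0 ∨ j = 1 →
      Module.finrank F (cyclicCode F E n β (Tset q m j)) = (n + 1) / 2 := by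
  intro j hj
  classical
  have hq1 : 1 < q := hq ▸ Nat.one_lt_two_pow (by omega)
  have hqe : Even q := hq ▸ (Nat.even_pow.2 ⟨even_two, by omega⟩)
  have hQe : Even (q ^ m) := hqe.pow_of_ne_zero hmodd.pos.ne'
  have hlt : ∀ k ∈ Tfinset q m j, k < n := fun k hk => by
    simp only [Tfinset, mem_filter, mem_Icc] at hk
    omega
  have hinj : Set.InjOn (β ^ ·) (Tfinset q m j) := fun k hk k' hk' h =>
    pow_injOn_Iio_orderOf (hβ ▸ hlt k hk) (hβ ▸ hlt k' hk') h
  have hclosed : ∀ x ∈ (Tfinset q m j).image (β ^ ·),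
      x ^ Fintype.card F ∈ (Tfinset q m j).image (β ^ ·) := by
    simp only [mem_image]
    rintro _ ⟨k, hk, rfl⟩
    refine ⟨q * k % n, hn ▸ mul_mod_mem_Tfinset hq1 hk, ?_⟩
    rw [hF, ← pow_mul, ← hβ, pow_mod_orderOf, mul_comm]
  obtain ⟨g, hg⟩ := (mem_lifts _).1 (prod_X_sub_C_mem_lifts (F := F) hclosed)
  rw [prod_image hinj] at hg
  have hcard := card_Tfinset hq1 hqe hmodd (show j < 2 by omega)
  obtain ⟨t, ht⟩ := hQe
  rw [← coe_Tfinset, finrank_cyclicCode hinj hg (by omega), hcard]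
  omega

theorem stmt14 (s q m n : ℕ) (hs : 1 ≤ s) (hq : q = 2 ^ s)
    (hm : 3 ≤ m) (hmodd : Odd m) (hn : n = q ^ m - 1)
    (F E : Type*) [Field F] [Fintype F] [DecidableEq F] [Field E] [Fintype E] [Algebra F E]
    (hF : Fintype.card F = q) (hE : Fintype.card E = q ^ m)
    (β : E) (hβ : orderOf β = n) :
    ∀ j : ℕ, j = 0 ∨ j = 1 →
      Module.finrank F (cyclicCode F E n β (Tset q m j)) = (n + 1) / 2 :=
  stmt14_general s q m n hs hq hmodd hn F E hF β hβ
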